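/- arXiv:0904.1115 — 5 statements merged into one kernel-verified Lean document; each statement's English description precedes it below -/
import Mathlib

section
/- The function Q(t) = (e^{-αt} - e^{-βt})/(1 - e^{-t}) for t ≠ 0, with Q(0) = β - α, is increasing on (0, ∞) if and only if (β - α)(1 - α - β) ≥ 0 and (β - α)(|α - β| - α - β) ≥ 0. -/
/-!
With `u = e^{-t}` the function becomes `f u = (u^α - u^β) / (1 - u)` on `(0, 1)`, so it is
increasing on `(0, ∞)` iff `f` is decreasing on `(0, 1)`.

Necessity: monotonicity forces `Q t ≥ Q 0⁺ = β - α`, i.e. `N t ≥ 0` on `(0, ∞)`, where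
`N t = e^{-αt} - e^{-βt} - (β - α)(1 - e^{-t})`. Since `N 0 = N' 0 = 0`, this needs
`N'' 0 = (β - α)(1 - α - β) ≥ 0`; and the behaviour of `N` at `+∞` forces `α ≤ 0` when `α < β`,
`β ≥ 0` when `β < α`.

Sufficiency: for `α < β` the numerator of `f'` is `u^{α-1} k u` with
`k u = α + (1 - α) u - β u^c + (β - 1) u^{c+1}`, `c = β - α`. The sign of `k''` on `(0, 1)` is
that of an affine function which is `≤ 0` at `1`, so `k` is convex and then concave on `[0, 1]`;
together with `k 0 = α ≤ 0` and `k 1 = k' 1 = 0` this gives `k ≤ 0`. The case `β < α` is the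
same with the roles of the two exponents exchanged.
-/

open Set Filter Real Topology

lemma hasDerivAt_exp_neg_mul (a t : ℝ) :
    HasDerivAt (fun t => exp (-a * t)) (-a * exp (-a * t)) t := by
  simpa [mul_comm] using ((hasDerivAt_id t).const_mul (-a)).exp

lemma hasDerivAt_exp_neg (t : ℝ) : HasDerivAt (fun t => exp (-t)) (-exp (-t)) t := by
  simpa using hasDerivAt_exp_neg_mul 1 t

lemma tendsto_exp_neg_mul_atTop {a : ℝ} (ha : 0 < a) :
    Tendsto (fun t => exp (-a * t)) atTop (𝓝 0) :=
  tendsto_exp_atBot.comp (tendsto_id.const_mul_atTop_of_neg (neg_neg_of_pos ha))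

lemma exp_neg_mem_Ioo {t : ℝ} (ht : 0 < t) : exp (-t) ∈ Ioo 0 1 :=
  ⟨exp_pos _, exp_lt_one_iff.2 (neg_neg_of_pos ht)⟩

lemma eventually_neg_nhdsGT_of_deriv_deriv_neg {f : ℝ → ℝ} {x₀ : ℝ} (hf : Differentiable ℝ f)
    (h₀ : f x₀ = 0) (hd : deriv f x₀ = 0) (hdd : deriv (deriv f) x₀ < 0) :
    ∀ᶠ x in 𝓝[>] x₀, f x < 0 := by
  have hneg : ∀ᶠ x in 𝓝[>] x₀, deriv f x < 0 := deriv_neg_right_of_sign_deriv <|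
    nhdsWithin_le_nhds (eventually_nhdsWithin_sign_eq_of_deriv_neg hdd hd)
  obtain ⟨u, hu, hsub⟩ := mem_nhdsGT_iff_exists_Ioo_subset.1 hneg
  have hanti : StrictAntiOn f (Ico x₀ u) :=
    strictAntiOn_of_deriv_neg (convex_Ico x₀ u) hf.continuous.continuousOn
      fun x hx => hsub (by rwa [interior_Ico] at hx)
  filter_upwards [Ioo_mem_nhdsGT hu] with x hx
  exact h₀ ▸ hanti ⟨le_rfl, hu⟩ ⟨hx.1.le, hx.2⟩ hx.1

lemma nonpos_of_convexOn_of_concaveOn {k : ℝ → ℝ} {a b m : ℝ} (hm : m ∈ Icc a b)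
    (hconv : ConvexOn ℝ (Icc a m) k) (hconc : ConcaveOn ℝ (Icc m b) k) (ha : k a ≤ 0)
    (hb : k b = 0) (hdb : HasDerivWithinAt k 0 (Iio b) b) {u : ℝ} (hu : u ∈ Icc a b) :
    k u ≤ 0 := by
  have hright : ∀ v ∈ Icc m b, k v ≤ 0 := by
    intro v hv
    rcases hv.2.eq_or_lt with rfl | hvb
    · exact hb.le
    have hslope := hconc.le_slope_of_hasDerivWithinAt_Iio hv ⟨hm.2, le_rfl⟩ hvb hdb
    rw [slope_def_field, hb] at hslope
    have := (le_div_iff₀ (sub_pos.2 hvb)).1 hslope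
    linarith
  rcases le_total u m with hum | hmu
  · exact (hconv.le_max_of_mem_Icc ⟨le_rfl, hm.1⟩ ⟨hm.1, le_rfl⟩ ⟨hu.1, hum⟩).trans
      (max_le ha (hright m ⟨le_rfl, hm.2⟩))
  · exact hright u ⟨hmu, hu.2⟩

lemma exists_sign_split_of_add_nonpos {a b : ℝ} (h : a + b ≤ 0) :
    ∃ m ∈ Icc (0 : ℝ) 1, (∀ u ∈ Ioo 0 m, 0 ≤ a + b * u) ∧ ∀ u ∈ Ioo m 1, a + b * u ≤ 0 := by
  rcases le_or_gt 0 b with hb | hb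
  · refine ⟨0, ⟨le_rfl, zero_le_one⟩, fun u hu => absurd hu.2 hu.1.not_gt, fun u hu => ?_⟩
    nlinarith [hu.2]
  · have hroot : -a / b ≤ 1 := by rw [div_le_one_of_neg hb]; linarith
    refine ⟨max 0 (-a / b), ⟨le_max_left _ _, max_le zero_le_one hroot⟩, fun u hu => ?_,
      fun u hu => ?_⟩
    · have hu' : u < -a / b := (lt_max_iff.1 hu.2).resolve_left hu.1.not_gt
      rw [lt_div_iff_of_neg hb] at hu'
      linarith
    · have hu' : -a / b < u := (le_max_right _ _).trans_lt hu.1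
      rw [div_lt_iff_of_neg hb] at hu'
      linarith

lemma add_mul_add_rpow_nonpos {c A B C D : ℝ} (hc : 0 < c) (hA : A ≤ 0)
    (h₁ : A + B + C + D = 0) (h₂ : B + c * C + (c + 1) * D = 0)
    (h₃ : (c - 1) * C + (c + 1) * D ≤ 0) {u : ℝ} (hu : u ∈ Icc 0 1) :
    A + B * u + C * u ^ c + D * u ^ (c + 1) ≤ 0 := by
  set k : ℝ → ℝ := fun u => A + B * u + C * u ^ c + D * u ^ (c + 1) with hk
  set k' : ℝ → ℝ := fun u => B + c * C * u ^ (c - 1) + (c + 1) * D * u ^ c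
  have hk' : ∀ u, 0 < u → HasDerivAt k (k' u) u := by
    intro u hu
    have h₁ := Real.hasDerivAt_rpow_const (p := c) (Or.inl hu.ne')
    have h₂ := Real.hasDerivAt_rpow_const (p := c + 1) (Or.inl hu.ne')
    refine (((((hasDerivAt_id u).const_mul B).const_add A).add (h₁.const_mul C)).add
      (h₂.const_mul D)).congr_deriv ?_
    simp only [k', add_sub_cancel_right]
    ring
  have hk'' : ∀ u, 0 < u →
      HasDerivAt k' (c * u ^ (c - 2) * ((c - 1) * C + (c + 1) * D * u)) u := by
    intro u hu
    have h₁ := Real.hasDerivAt_rpow_const (p := c - 1) (Or.inl hu.ne')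
    have h₂ := Real.hasDerivAt_rpow_const (p := c) (Or.inl hu.ne')
    refine (((h₁.const_mul (c * C)).const_add B).add (h₂.const_mul ((c + 1) * D))).congr_deriv ?_
    have : u ^ (c - 1) = u ^ (c - 2) * u := by
      rw [← Real.rpow_add_one hu.ne']; ring_nf
    rw [this, show c - 1 - 1 = c - 2 by ring]
    ring
  have hcont : Continuous k := by
    have : Continuous fun u : ℝ => u ^ c := Real.continuous_rpow_const hc.le
    have : Continuous fun u : ℝ => u ^ (c + 1) := Real.continuous_rpow_const (by linarith)
    fun_prop
  have hderiv2 : ∀ {s t : ℝ}, 0 ≤ s →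
      (∀ x ∈ interior (Icc s t), HasDerivWithinAt k (k' x) (interior (Icc s t)) x) ∧
      ∀ x ∈ interior (Icc s t), HasDerivWithinAt k' (c * x ^ (c - 2) *
        ((c - 1) * C + (c + 1) * D * x)) (interior (Icc s t)) x := by
    intro s t hs
    rw [interior_Icc]
    exact ⟨fun x hx => (hk' x (hs.trans_lt hx.1)).hasDerivWithinAt,
      fun x hx => (hk'' x (hs.trans_lt hx.1)).hasDerivWithinAt⟩
  -- `k''` is a positive multiple of an affine function that is `≤ 0` at `1`.
  obtain ⟨m, hm, hpos, hneg⟩ := exists_sign_split_of_add_nonpos h₃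
  refine nonpos_of_convexOn_of_concaveOn (k := k) hm ?_ ?_ ?_ ?_ ?_ hu
  · refine convexOn_of_hasDerivWithinAt2_nonneg (convex_Icc 0 m) hcont.continuousOn
      (hderiv2 le_rfl).1 (hderiv2 le_rfl).2 fun x hx => ?_
    rw [interior_Icc] at hx
    exact mul_nonneg (by have := hx.1; positivity) (hpos x hx)
  · refine concaveOn_of_hasDerivWithinAt2_nonpos (convex_Icc m 1) hcont.continuousOn
      (hderiv2 hm.1).1 (hderiv2 hm.1).2 fun x hx => ?_
    rw [interior_Icc] at hx
    exact mul_nonpos_of_nonneg_of_nonpos (by have := hm.1.trans_lt hx.1; positivity) (hneg x hx)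
  · simpa [hk, Real.zero_rpow hc.ne', Real.zero_rpow (by linarith : c + 1 ≠ 0)] using hA
  · simpa [hk] using h₁
  · refine (hk' 1 one_pos).hasDerivWithinAt.congr_deriv ?_
    simpa [k'] using h₂

lemma rpow_sub_one_mul_add {u : ℝ} (hu : 0 < u) (p q a b c d : ℝ) :
    u ^ (p - 1) * (a + b * u + c * u ^ (q - p) + d * u ^ (q - p + 1)) =
      a * u ^ (p - 1) + b * u ^ p + c * u ^ (q - 1) + d * u ^ q := by
  have e₁ : u ^ (p - 1) * u = u ^ p := by rw [← Real.rpow_add_one hu.ne']; ring_nf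
  have e₂ : u ^ (p - 1) * u ^ (q - p) = u ^ (q - 1) := by rw [← Real.rpow_add hu]; ring_nf
  have e₃ : u ^ (p - 1) * u ^ (q - p + 1) = u ^ q := by rw [← Real.rpow_add hu]; ring_nf
  rw [← e₁, ← e₂, ← e₃]
  ring

noncomputable def rpowRatio (α β u : ℝ) : ℝ := (u ^ α - u ^ β) / (1 - u)

noncomputable def rpowRatioDerivNum (α β u : ℝ) : ℝ :=
  α * u ^ (α - 1) - β * u ^ (β - 1) + (1 - α) * u ^ α + (β - 1) * u ^ β

lemma hasDerivAt_rpowRatio (α β : ℝ) {u : ℝ} (hu : u ∈ Ioo 0 1) :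
    HasDerivAt (rpowRatio α β) (rpowRatioDerivNum α β u / (1 - u) ^ 2) u := by
  have hα := Real.hasDerivAt_rpow_const (p := α) (Or.inl hu.1.ne')
  have hβ := Real.hasDerivAt_rpow_const (p := β) (Or.inl hu.1.ne')
  have hden : HasDerivAt (fun u : ℝ => 1 - u) (-1) u := by
    simpa using (hasDerivAt_id u).const_sub 1
  refine ((hα.sub hβ).div hden (sub_ne_zero.2 hu.2.ne')).congr_deriv ?_
  have e₁ : u ^ (α - 1) * u = u ^ α := by rw [← Real.rpow_add_one hu.1.ne']; ring_nf
  have e₂ : u ^ (β - 1) * u = u ^ β := by rw [← Real.rpow_add_one hu.1.ne']; ring_nf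
  simp only [Pi.sub_apply]
  rw [rpowRatioDerivNum, ← e₁, ← e₂]
  ring

lemma antitoneOn_rpowRatio {α β : ℝ} (hnum : ∀ u ∈ Ioo 0 1, rpowRatioDerivNum α β u ≤ 0) :
    AntitoneOn (rpowRatio α β) (Ioo 0 1) := by
  refine antitoneOn_of_hasDerivWithinAt_nonpos (convex_Ioo 0 1)
    (f' := fun u => rpowRatioDerivNum α β u / (1 - u) ^ 2)
    (fun u hu => (hasDerivAt_rpowRatio α β hu).continuousAt.continuousWithinAt)
    (fun u hu => ?_) (fun u hu => ?_) <;> rw [interior_Ioo] at hu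
  · exact (hasDerivAt_rpowRatio α β hu).hasDerivWithinAt
  · exact div_nonpos_of_nonpos_of_nonneg (hnum u hu) (sq_nonneg _)

lemma rpowRatioDerivNum_nonpos_of_lt {α β : ℝ} (hlt : α < β) (hα : α ≤ 0) (hsum : α + β ≤ 1)
    {u : ℝ} (hu : u ∈ Ioo 0 1) : rpowRatioDerivNum α β u ≤ 0 := by
  have hk := add_mul_add_rpow_nonpos (c := β - α) (A := α) (B := 1 - α) (C := -β) (D := β - 1)
    (by linarith) hα (by ring) (by ring) (by nlinarith) ⟨hu.1.le, hu.2.le⟩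
  calc rpowRatioDerivNum α β u
      = u ^ (α - 1) * (α + (1 - α) * u + -β * u ^ (β - α) + (β - 1) * u ^ (β - α + 1)) := by
        rw [rpow_sub_one_mul_add hu.1, rpowRatioDerivNum]; ring
    _ ≤ 0 := mul_nonpos_of_nonneg_of_nonpos (by have := hu.1; positivity) hk

lemma rpowRatioDerivNum_nonpos_of_gt {α β : ℝ} (hlt : β < α) (hβ : 0 ≤ β) (hsum : 1 ≤ α + β)
    {u : ℝ} (hu : u ∈ Ioo 0 1) : rpowRatioDerivNum α β u ≤ 0 := by
  have hk := add_mul_add_rpow_nonpos (c := α - β) (A := -β) (B := β - 1) (C := α) (D := 1 - α)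
    (by linarith) (by linarith) (by ring) (by ring) (by nlinarith) ⟨hu.1.le, hu.2.le⟩
  calc rpowRatioDerivNum α β u
      = u ^ (β - 1) * (-β + (β - 1) * u + α * u ^ (α - β) + (1 - α) * u ^ (α - β + 1)) := by
        rw [rpow_sub_one_mul_add hu.1, rpowRatioDerivNum]; ring
    _ ≤ 0 := mul_nonpos_of_nonneg_of_nonpos (by have := hu.1; positivity) hk

noncomputable def expRatio (α β t : ℝ) : ℝ := (exp (-α * t) - exp (-β * t)) / (1 - exp (-t))

lemma expRatio_eq_rpowRatio (α β t : ℝ) : expRatio α β t = rpowRatio α β (exp (-t)) := by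
  simp only [expRatio, rpowRatio, ← Real.exp_mul, neg_mul, mul_comm t]

lemma monotoneOn_expRatio {α β : ℝ} (hnum : ∀ u ∈ Ioo 0 1, rpowRatioDerivNum α β u ≤ 0) :
    MonotoneOn (expRatio α β) (Ioi 0) := by
  intro s hs t ht hst
  rw [expRatio_eq_rpowRatio, expRatio_eq_rpowRatio]
  exact antitoneOn_rpowRatio hnum (exp_neg_mem_Ioo ht) (exp_neg_mem_Ioo hs)
    (exp_le_exp.2 (neg_le_neg hst))

lemma tendsto_expRatio_nhdsGT_zero (α β : ℝ) :
    Tendsto (expRatio α β) (𝓝[>] 0) (𝓝 (β - α)) := by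
  have hcont : ∀ {F : ℝ → ℝ}, Continuous F → Tendsto F (𝓝[>] 0) (𝓝 (F 0)) :=
    fun hF => (hF.tendsto 0).mono_left nhdsWithin_le_nhds
  have hlim := hcont (F := fun t => (-α * exp (-α * t) - -β * exp (-β * t)) / exp (-t))
    (by fun_prop (disch := exact fun t => (exp_pos _).ne'))
  have hnum := hcont (F := fun t => exp (-α * t) - exp (-β * t)) (by fun_prop)
  have hden := hcont (F := fun t => 1 - exp (-t)) (by fun_prop)
  simp only [mul_zero, neg_zero, exp_zero] at hlim hnum hden
  refine HasDerivAt.lhopital_zero_nhdsGT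
    (.of_forall fun t => (hasDerivAt_exp_neg_mul α t).sub (hasDerivAt_exp_neg_mul β t))
    (.of_forall fun t => by simpa using (hasDerivAt_exp_neg t).const_sub 1)
    (.of_forall fun t => (exp_pos _).ne') (by simpa using hnum) (by simpa using hden) ?_
  convert hlim using 2
  ring

-- `(1 - e^{-t}) (expRatio α β t - (β - α))`
noncomputable def expGap (α β t : ℝ) : ℝ :=
  exp (-α * t) - exp (-β * t) - (β - α) * (1 - exp (-t))

lemma expGap_nonneg_of_monotoneOn {α β : ℝ} (hm : MonotoneOn (expRatio α β) (Ioi 0)) :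
    ∀ t > 0, 0 ≤ expGap α β t := by
  intro t ht
  have hle : β - α ≤ expRatio α β t := by
    refine le_of_tendsto (tendsto_expRatio_nhdsGT_zero α β) ?_
    filter_upwards [Ioo_mem_nhdsGT ht] with s hs
    exact hm hs.1 ht hs.2.le
  rw [expRatio, le_div_iff₀ (sub_pos.2 (exp_neg_mem_Ioo ht).2)] at hle
  rw [expGap]
  linarith

lemma hasDerivAt_expGap (α β t : ℝ) : HasDerivAt (expGap α β)
    (-α * exp (-α * t) + β * exp (-β * t) - (β - α) * exp (-t)) t := by
  refine (((hasDerivAt_exp_neg_mul α t).sub (hasDerivAt_exp_neg_mul β t)).sub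
    (((hasDerivAt_exp_neg t).const_sub 1).const_mul (β - α))).congr_deriv ?_
  ring

lemma hasDerivAt_deriv_expGap (α β t : ℝ) : HasDerivAt (deriv (expGap α β))
    (α ^ 2 * exp (-α * t) - β ^ 2 * exp (-β * t) + (β - α) * exp (-t)) t := by
  rw [funext fun t => (hasDerivAt_expGap α β t).deriv]
  refine ((((hasDerivAt_exp_neg_mul α t).const_mul (-α)).add
    ((hasDerivAt_exp_neg_mul β t).const_mul β)).sub
    ((hasDerivAt_exp_neg t).const_mul (β - α))).congr_deriv ?_
  ring

lemma sub_mul_one_sub_sub_nonneg_of_expGap_nonneg {α β : ℝ}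
    (hgap : ∀ t > 0, 0 ≤ expGap α β t) : 0 ≤ (β - α) * (1 - α - β) := by
  by_contra! h
  have hneg := eventually_neg_nhdsGT_of_deriv_deriv_neg (x₀ := 0)
    (fun t => (hasDerivAt_expGap α β t).differentiableAt) (by simp [expGap])
    (by rw [(hasDerivAt_expGap α β 0).deriv]; simp only [mul_zero, neg_zero, exp_zero]; ring)
    (by rw [(hasDerivAt_deriv_expGap α β 0).deriv]; simp only [mul_zero, neg_zero, exp_zero]
        nlinarith)
  obtain ⟨t, ht, ht₀⟩ := (hneg.and self_mem_nhdsWithin).exists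
  exact (hgap t ht₀).not_gt ht

lemma nonpos_of_lt_of_expGap_nonneg {α β : ℝ} (hlt : α < β)
    (hgap : ∀ t > 0, 0 ≤ expGap α β t) : α ≤ 0 := by
  by_contra! hα
  have hlim : Tendsto (expGap α β) atTop (𝓝 (0 - 0 - (β - α) * (1 - 0))) :=
    (((tendsto_exp_neg_mul_atTop hα).sub (tendsto_exp_neg_mul_atTop (hα.trans hlt))).sub
      ((tendsto_exp_neg_atTop_nhds_zero.const_sub 1).const_mul _))
  have := ge_of_tendsto hlim (eventually_gt_atTop 0 |>.mono hgap)
  linarith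

lemma nonneg_of_gt_of_expGap_nonneg {α β : ℝ} (hlt : β < α)
    (hgap : ∀ t > 0, 0 ≤ expGap α β t) : 0 ≤ β := by
  by_contra! hβ
  -- After scaling by `e^{βt}` every exponential decays, leaving the limit `-1`.
  have hscaled : ∀ t, exp (β * t) * expGap α β t =
      exp (-(α - β) * t) - 1 - (β - α) * (exp (-(-β) * t) - exp (-(1 - β) * t)) := by
    intro t
    have e₁ : exp (β * t) * exp (-α * t) = exp (-(α - β) * t) := by rw [← exp_add]; ring_nf
    have e₂ : exp (β * t) * exp (-β * t) = 1 := by rw [← exp_add]; simp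
    have e₃ : exp (β * t) * exp (-t) = exp (-(1 - β) * t) := by rw [← exp_add]; ring_nf
    rw [expGap, show -(-β) * t = β * t by ring]
    linear_combination e₁ - e₂ + (β - α) * e₃
  have hlim : Tendsto (fun t => exp (β * t) * expGap α β t) atTop
      (𝓝 (0 - 1 - (β - α) * (0 - 0))) := by
    simp only [hscaled]
    exact ((tendsto_exp_neg_mul_atTop (sub_pos.2 hlt)).sub_const 1).sub
      (((tendsto_exp_neg_mul_atTop (neg_pos.2 hβ)).sub
        (tendsto_exp_neg_mul_atTop (by linarith))).const_mul _)
  have := ge_of_tendsto hlim (eventually_gt_atTop 0 |>.mono fun t ht =>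
    mul_nonneg (exp_pos _).le (hgap t ht))
  linarith

theorem stmt0_general (α β : ℝ) :
    MonotoneOn (fun t : ℝ => if t = 0 then β - α else (Real.exp (-α*t) - Real.exp (-β*t)) / (1 - Real.exp (-t))) (Set.Ioi 0) ↔
      (β - α) * (1 - α - β) ≥ 0 ∧ (β - α) * (|α - β| - α - β) ≥ 0 := by
  have hEq : EqOn (fun t : ℝ => if t = 0 then β - α else
      (exp (-α * t) - exp (-β * t)) / (1 - exp (-t))) (expRatio α β) (Ioi 0) :=
    fun t ht => if_neg (ne_of_gt ht)
  rw [hEq.congr_monotoneOn]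
  rcases lt_trichotomy α β with hlt | rfl | hlt
  · rw [abs_of_neg (sub_neg.2 hlt)]
    refine ⟨fun hm => ?_, fun ⟨h₁, h₂⟩ => monotoneOn_expRatio fun u =>
      rpowRatioDerivNum_nonpos_of_lt hlt (by nlinarith) (by nlinarith)⟩
    have hgap := expGap_nonneg_of_monotoneOn hm
    have hα := nonpos_of_lt_of_expGap_nonneg hlt hgap
    exact ⟨sub_mul_one_sub_sub_nonneg_of_expGap_nonneg hgap, by nlinarith⟩
  · have hzero : expRatio α α = fun _ => 0 := funext fun t => by simp [expRatio]
    simp [hzero, monotoneOn_const]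
  · rw [abs_of_pos (sub_pos.2 hlt)]
    refine ⟨fun hm => ?_, fun ⟨h₁, h₂⟩ => monotoneOn_expRatio fun u =>
      rpowRatioDerivNum_nonpos_of_gt hlt (by nlinarith) (by nlinarith)⟩
    have hgap := expGap_nonneg_of_monotoneOn hm
    have hβ := nonneg_of_gt_of_expGap_nonneg hlt hgap
    exact ⟨sub_mul_one_sub_sub_nonneg_of_expGap_nonneg hgap, by nlinarith⟩

theorem stmt0 (α β : ℝ) (hab : α ≠ β) (h01 : (α, β) ≠ (0, 1)) (h10 : (α, β) ≠ (1, 0)) :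
    MonotoneOn (fun t : ℝ => if t = 0 then β - α else (Real.exp (-α*t) - Real.exp (-β*t)) / (1 - Real.exp (-t))) (Set.Ioi 0) ↔
      (β - α) * (1 - α - β) ≥ 0 ∧ (β - α) * (|α - β| - α - β) ≥ 0 :=
  stmt0_general α β
end

section
/- The function Q(t) = (e^{-αt} - e^{-βt})/(1 - e^{-t}) for t ≠ 0, with Q(0) = β - α, is decreasing on (0, ∞) if and only if (β - α)(1 - α - β) ≤ 0 and (β - α)(|α - β| - α - β) ≤ 0. -/
/-!
With `t = 2u`, `d = β - α` and `c = α + β - 1` one has `Q(2u) = e^{-cu} sinh(du) / sinh u`, whose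
logarithmic derivative is `d coth(du) - coth u - c`. Writing `d coth(du) - coth u = (g(du) - g(u)) / u`
with `g(x) = x coth x`, the monotonicity of `g` and of `g(x) - x` on `(0, ∞)` keeps this quantity
between `0` and `|d| - 1`, while the bounds `1 ≤ g(x) ≤ 1 + x²` and `x ≤ g(x) ≤ 1 + x` show that it
tends to `0` as `u → 0⁺` and to `|d| - 1` as `u → ∞`. Hence for `d > 0` the function is decreasing
iff `max 0 (d - 1) ≤ c`, and for `d < 0` (where it is negative) iff `c ≤ min 0 (|d| - 1)`.
-/

open Real Set

theorem antitoneOn_iff_of_hasDerivAt {f f' : ℝ → ℝ} {s : Set ℝ} (hs : IsOpen s)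
    (hs' : Convex ℝ s) (hf : ∀ x ∈ s, HasDerivAt f (f' x) x) :
    AntitoneOn f s ↔ ∀ x ∈ s, f' x ≤ 0 := by
  refine ⟨fun h x hx => (hf x hx).hasDerivWithinAt.nonpos_of_antitoneOn (hs.preperfect x hx) h,
    fun h => antitoneOn_of_hasDerivWithinAt_nonpos (f' := f') hs'
      (fun x hx => (hf x hx).continuousAt.continuousWithinAt) (fun x hx => ?_) ?_⟩
  · rw [hs.interior_eq] at hx ⊢
    exact (hf x hx).hasDerivWithinAt
  · rwa [hs.interior_eq]

theorem antitoneOn_Ioi_comp_div_iff {f : ℝ → ℝ} {k : ℝ} (hk : 0 < k) :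
    AntitoneOn (fun x => f (x / k)) (Ioi 0) ↔ AntitoneOn f (Ioi 0) := by
  refine ⟨fun h x hx y hy hxy => ?_, fun h x hx y hy hxy =>
    h (div_pos hx hk) (div_pos hy hk) (div_le_div_of_nonneg_right hxy hk.le)⟩
  simpa [hk.ne'] using h (mul_pos hx hk) (mul_pos hy hk) (mul_le_mul_of_nonneg_right hxy hk.le)

namespace Real

theorem exp_sub_exp_eq_mul_sinh (x y : ℝ) :
    exp x - exp y = exp ((x + y) / 2) * (2 * sinh ((x - y) / 2)) := by
  rw [sinh_eq, mul_div_cancel₀ _ two_ne_zero, mul_sub, ← exp_add, ← exp_add]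
  ring_nf

theorem mul_sinh_nonneg (x : ℝ) : 0 ≤ x * sinh x := by
  rcases le_total 0 x with hx | hx
  · exact mul_nonneg hx (sinh_nonneg_iff.2 hx)
  · exact mul_nonneg_of_nonpos_of_nonpos hx (sinh_nonpos_iff.2 hx)

theorem sinh_le_mul_cosh {x : ℝ} (hx : 0 ≤ x) : sinh x ≤ x * cosh x := by
  have hmono : Monotone fun x => x * cosh x - sinh x := by
    refine monotone_of_hasDerivAt_nonneg (f' := fun x => x * sinh x) (fun x => ?_) mul_sinh_nonneg
    exact (((hasDerivAt_id' x).mul (hasDerivAt_cosh x)).sub (hasDerivAt_sinh x)).congr_deriv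
      (by ring)
  simpa using hmono hx

theorem mul_cosh_le_one_add_sq_mul_sinh {x : ℝ} (hx : 0 ≤ x) :
    x * cosh x ≤ (1 + x ^ 2) * sinh x := by
  have hmono : Monotone fun x => (1 + x ^ 2) * sinh x - x * cosh x := by
    refine monotone_of_hasDerivAt_nonneg (f' := fun x => x * sinh x + x ^ 2 * cosh x)
      (fun x => ?_) fun x => add_nonneg (mul_sinh_nonneg x) (by positivity)
    exact ((((hasDerivAt_pow 2 x).const_add 1).mul (hasDerivAt_sinh x)).sub
      ((hasDerivAt_id' x).mul (hasDerivAt_cosh x))).congr_deriv (by ring)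
  simpa using hmono hx

end Real

noncomputable def xCoth (x : ℝ) : ℝ := x * cosh x / sinh x

theorem xCoth_neg (x : ℝ) : xCoth (-x) = xCoth x := by
  simp only [xCoth, cosh_neg, sinh_neg, neg_mul, neg_div_neg_eq]

theorem hasDerivAt_xCoth {x : ℝ} (hx : x ≠ 0) :
    HasDerivAt xCoth ((sinh x * cosh x - x) / sinh x ^ 2) x := by
  refine (((hasDerivAt_id' x).mul (hasDerivAt_cosh x)).div (hasDerivAt_sinh x)
    (sinh_ne_zero.2 hx)).congr_deriv ?_
  simp only [Pi.mul_apply]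
  congr 1
  linear_combination (-x) * cosh_sq x

theorem monotoneOn_xCoth : MonotoneOn xCoth (Ioi 0) := by
  refine monotoneOn_of_hasDerivWithinAt_nonneg (convex_Ioi 0)
    (fun x hx => (hasDerivAt_xCoth (ne_of_gt hx)).continuousAt.continuousWithinAt)
    (fun x hx => (hasDerivAt_xCoth (ne_of_gt (interior_subset hx))).hasDerivWithinAt)
    fun x hx => div_nonneg ?_ (sq_nonneg _)
  have h2x : 2 * x ≤ sinh (2 * x) := self_le_sinh_iff.2 (by simp at hx; linarith)
  rw [sinh_two_mul] at h2x
  linarith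

theorem antitoneOn_xCoth_sub_self : AntitoneOn (fun x => xCoth x - x) (Ioi 0) := by
  refine antitoneOn_of_hasDerivWithinAt_nonpos (convex_Ioi 0)
    (fun x hx => ((hasDerivAt_xCoth (ne_of_gt hx)).sub
      (hasDerivAt_id' x)).continuousAt.continuousWithinAt)
    (fun x hx => ((hasDerivAt_xCoth (ne_of_gt (interior_subset hx))).sub
      (hasDerivAt_id' x)).hasDerivWithinAt)
    fun x hx => ?_
  have hs : 0 < sinh x ^ 2 := by
    simp only [interior_Ioi, mem_Ioi] at hx
    exact pow_pos (sinh_pos_iff.2 hx) 2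
  rw [sub_nonpos, div_le_one hs]
  -- `sinh x cosh x - sinh² x = (1 - e^{-2x}) / 2`
  have h := add_one_le_exp (-(2 * x))
  rw [← cosh_sub_sinh, sinh_two_mul, cosh_two_mul, cosh_sq] at h
  linarith

theorem one_le_xCoth {x : ℝ} (hx : 0 < x) : 1 ≤ xCoth x := by
  rw [xCoth, le_div_iff₀ (sinh_pos_iff.2 hx), one_mul]
  exact sinh_le_mul_cosh hx.le

theorem xCoth_le_one_add_sq {x : ℝ} (hx : 0 < x) : xCoth x ≤ 1 + x ^ 2 := by
  rw [xCoth, div_le_iff₀ (sinh_pos_iff.2 hx)]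
  exact mul_cosh_le_one_add_sq_mul_sinh hx.le

theorem self_le_xCoth {x : ℝ} (hx : 0 < x) : x ≤ xCoth x := by
  rw [xCoth, le_div_iff₀ (sinh_pos_iff.2 hx)]
  exact mul_le_mul_of_nonneg_left (sinh_lt_cosh x).le hx.le

theorem xCoth_le_one_add_self {x : ℝ} (hx : 0 < x) : xCoth x ≤ 1 + x := by
  rw [xCoth, div_le_iff₀ (sinh_pos_iff.2 hx)]
  have h := add_one_le_exp (2 * x)
  rw [← cosh_add_sinh, sinh_two_mul, cosh_two_mul, cosh_sq] at h
  nlinarith [cosh_sq x, sinh_lt_cosh x, cosh_pos x]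

/-- `e coth (e u) - coth u` for `u ≠ 0`. -/
noncomputable def cothDiff (e u : ℝ) : ℝ := (xCoth (e * u) - xCoth u) / u

theorem cothDiff_neg (e u : ℝ) : cothDiff (-e) u = cothDiff e u := by
  rw [cothDiff, cothDiff, neg_mul, xCoth_neg]

theorem neg_le_cothDiff {e u : ℝ} (he : 0 < e) (hu : 0 < u) : -u ≤ cothDiff e u := by
  rw [cothDiff, le_div_iff₀ hu]
  nlinarith [one_le_xCoth (mul_pos he hu), xCoth_le_one_add_sq hu]

theorem cothDiff_le_sq_mul {e u : ℝ} (he : 0 < e) (hu : 0 < u) : cothDiff e u ≤ e ^ 2 * u := by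
  rw [cothDiff, div_le_iff₀ hu]
  nlinarith [xCoth_le_one_add_sq (mul_pos he hu), one_le_xCoth hu]

theorem sub_inv_le_cothDiff {e u : ℝ} (he : 0 < e) (hu : 0 < u) :
    e - 1 - u⁻¹ ≤ cothDiff e u := by
  rw [cothDiff, le_div_iff₀ hu, sub_mul, inv_mul_cancel₀ hu.ne']
  nlinarith [self_le_xCoth (mul_pos he hu), xCoth_le_one_add_self hu]

theorem cothDiff_le_add_inv {e u : ℝ} (he : 0 < e) (hu : 0 < u) :
    cothDiff e u ≤ e - 1 + u⁻¹ := by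
  rw [cothDiff, div_le_iff₀ hu, add_mul, inv_mul_cancel₀ hu.ne']
  nlinarith [xCoth_le_one_add_self (mul_pos he hu), self_le_xCoth hu]

theorem cothDiff_le_max {e u : ℝ} (he : 0 < e) (hu : 0 < u) :
    cothDiff e u ≤ max 0 (e - 1) := by
  rw [cothDiff, div_le_iff₀ hu]
  rcases le_total e 1 with he1 | he1
  · have := monotoneOn_xCoth (mul_pos he hu) hu (by nlinarith)
    nlinarith [le_max_left 0 (e - 1)]
  · have := antitoneOn_xCoth_sub_self hu (mul_pos he hu) (by nlinarith)
    nlinarith [le_max_right 0 (e - 1)]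

theorem min_le_cothDiff {e u : ℝ} (he : 0 < e) (hu : 0 < u) :
    min 0 (e - 1) ≤ cothDiff e u := by
  rw [cothDiff, le_div_iff₀ hu]
  rcases le_total 1 e with he1 | he1
  · have := monotoneOn_xCoth hu (mul_pos he hu) (by nlinarith)
    nlinarith [min_le_left 0 (e - 1)]
  · have := antitoneOn_xCoth_sub_self (mul_pos he hu) hu (by nlinarith)
    nlinarith [min_le_right 0 (e - 1)]

theorem forall_cothDiff_le_iff {e c : ℝ} (he : 0 < e) :
    (∀ u, 0 < u → cothDiff e u ≤ c) ↔ max 0 (e - 1) ≤ c := by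
  refine ⟨fun h => max_le ?_ ?_, fun h u hu => (cothDiff_le_max he hu).trans h⟩
  · refine le_of_forall_pos_le_add fun u hu => ?_
    linarith [neg_le_cothDiff he hu, h u hu]
  · refine le_of_forall_pos_le_add fun ε hε => ?_
    have := sub_inv_le_cothDiff he (inv_pos.2 hε)
    rw [inv_inv] at this
    linarith [h ε⁻¹ (inv_pos.2 hε)]

theorem forall_le_cothDiff_iff {e c : ℝ} (he : 0 < e) :
    (∀ u, 0 < u → c ≤ cothDiff e u) ↔ c ≤ min 0 (e - 1) := by
  refine ⟨fun h => le_min ?_ ?_, fun h u hu => h.trans (min_le_cothDiff he hu)⟩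
  · refine le_of_forall_pos_le_add fun ε hε => ?_
    have hu : 0 < ε / e ^ 2 := by positivity
    have := cothDiff_le_sq_mul he hu
    rw [mul_div_cancel₀ _ (by positivity)] at this
    linarith [h _ hu]
  · refine le_of_forall_pos_le_add fun ε hε => ?_
    have := cothDiff_le_add_inv he (inv_pos.2 hε)
    rw [inv_inv] at this
    linarith [h ε⁻¹ (inv_pos.2 hε)]

noncomputable def expSinhRatio (d c u : ℝ) : ℝ := exp (-c * u) * sinh (d * u) / sinh u

theorem exp_sub_exp_div_one_sub_exp (α β t : ℝ) :
    (exp (-α * t) - exp (-β * t)) / (1 - exp (-t)) =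
      expSinhRatio (β - α) (α + β - 1) (t / 2) := by
  conv_lhs => rw [← exp_zero]
  rw [exp_sub_exp_eq_mul_sinh, exp_sub_exp_eq_mul_sinh, mul_div_mul_comm, ← exp_sub,
    mul_div_mul_left _ _ two_ne_zero, expSinhRatio, mul_div_assoc]
  ring_nf

theorem hasDerivAt_expSinhRatio {d c u : ℝ} (hd : d ≠ 0) (hu : u ≠ 0) :
    HasDerivAt (expSinhRatio d c) (expSinhRatio d c u * (cothDiff d u - c)) u := by
  have hdu : sinh (d * u) ≠ 0 := sinh_ne_zero.2 (mul_ne_zero hd hu)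
  have hsu : sinh u ≠ 0 := sinh_ne_zero.2 hu
  refine ((((hasDerivAt_id' u).const_mul (-c)).exp.mul ((hasDerivAt_id' u).const_mul d).sinh).div
    (hasDerivAt_sinh u) hsu).congr_deriv ?_
  simp only [expSinhRatio, cothDiff, xCoth, Pi.mul_apply]
  field_simp
  ring

theorem antitoneOn_expSinhRatio_iff_of_pos {d c : ℝ} (hd : 0 < d) :
    AntitoneOn (expSinhRatio d c) (Ioi 0) ↔ max 0 (d - 1) ≤ c := by
  rw [antitoneOn_iff_of_hasDerivAt isOpen_Ioi (convex_Ioi 0)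
    fun u hu => hasDerivAt_expSinhRatio hd.ne' (ne_of_gt hu), ← forall_cothDiff_le_iff hd]
  refine forall₂_congr fun u (hu : 0 < u) => ?_
  have hpos : 0 < expSinhRatio d c u :=
    div_pos (mul_pos (exp_pos _) (sinh_pos_iff.2 (mul_pos hd hu))) (sinh_pos_iff.2 hu)
  rw [← mul_zero (expSinhRatio d c u), mul_le_mul_iff_right₀ hpos, sub_nonpos]

theorem antitoneOn_expSinhRatio_iff_of_neg {d c : ℝ} (hd : d < 0) :
    AntitoneOn (expSinhRatio d c) (Ioi 0) ↔ c ≤ min 0 (-d - 1) := by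
  rw [antitoneOn_iff_of_hasDerivAt isOpen_Ioi (convex_Ioi 0)
    fun u hu => hasDerivAt_expSinhRatio hd.ne (ne_of_gt hu),
    ← forall_le_cothDiff_iff (neg_pos.2 hd)]
  refine forall₂_congr fun u (hu : 0 < u) => ?_
  have hneg : expSinhRatio d c u < 0 :=
    div_neg_of_neg_of_pos
      (mul_neg_of_pos_of_neg (exp_pos _) (sinh_neg_iff.2 (mul_neg_of_neg_of_pos hd hu)))
      (sinh_pos_iff.2 hu)
  rw [← mul_zero (expSinhRatio d c u), mul_le_mul_left_of_neg hneg, sub_nonneg, cothDiff_neg]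

theorem stmt1_general (α β : ℝ) (hab : α ≠ β) :
    AntitoneOn (fun t : ℝ => if t = 0 then β - α else (Real.exp (-α*t) - Real.exp (-β*t)) / (1 - Real.exp (-t))) (Set.Ioi 0) ↔
      (β - α) * (1 - α - β) ≤ 0 ∧ (β - α) * (|α - β| - α - β) ≤ 0 := by
  have hQ : EqOn (fun t : ℝ => if t = 0 then β - α else
      (exp (-α * t) - exp (-β * t)) / (1 - exp (-t)))
      (fun t => expSinhRatio (β - α) (α + β - 1) (t / 2)) (Ioi 0) := fun t (ht : 0 < t) => by
    simp only [if_neg ht.ne', exp_sub_exp_div_one_sub_exp]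
  rw [hQ.congr_antitoneOn, antitoneOn_Ioi_comp_div_iff two_pos]
  rcases lt_or_gt_of_ne (sub_ne_zero.2 hab.symm) with hd | hd
  · rw [antitoneOn_expSinhRatio_iff_of_neg hd, le_min_iff, abs_of_pos (by linarith)]
    constructor <;> rintro ⟨h1, h2⟩ <;> constructor <;> nlinarith
  · rw [antitoneOn_expSinhRatio_iff_of_pos hd, max_le_iff, abs_of_neg (by linarith)]
    constructor <;> rintro ⟨h1, h2⟩ <;> constructor <;> nlinarith

theorem stmt1 (α β : ℝ) (hab : α ≠ β) (h01 : (α, β) ≠ (0, 1)) (h10 : (α, β) ≠ (1, 0)) :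
    AntitoneOn (fun t : ℝ => if t = 0 then β - α else (Real.exp (-α*t) - Real.exp (-β*t)) / (1 - Real.exp (-t))) (Set.Ioi 0) ↔
      (β - α) * (1 - α - β) ≤ 0 ∧ (β - α) * (|α - β| - α - β) ≤ 0 :=
  stmt1_general α β hab
end

section
/- If β - α > 1, then the function Q(t) = (e^{-αt} - e^{-βt})/(1 - e^{-t}) for t ≠ 0, with Q(0) = β - α, is logarithmically convex on ℝ; if 0 < β - α < 1, it is logarithmically concave on ℝ. -/
/-!
Write `s = β - α` and `B v = v / (e^v - 1)`. Since `Q t = e^{-α t} (1 - e^{-s t}) / (1 - e^{-t})`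
and `∂ᵤ log ((1 - e^{-u t}) / (u t)) = (B (u t) - 1) / u`,
`log Q t = -α t + log s + ∫₁ˢ (B (u t) - 1) / u du`.
The function `B` is convex: away from `0` its second derivative has the sign of
`(v (e^v + 1) - 2 (e^v - 1)) (e^v - 1) ≥ 0`, and the tangent line `1 - v / 2` at `0` supports it
globally, which glues the two half-lines. So each integrand is convex in `t`, and the integral is
convex for `s > 1` and concave for `s < 1`, where it is minus an integral over `[s, 1]`.
-/

open Real Set MeasureTheory Filter Topology

section Convexity

variable {𝕜 : Type*} [Field 𝕜] [LinearOrder 𝕜] [IsStrictOrderedRing 𝕜]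
  {f : 𝕜 → 𝕜} {a : 𝕜}

lemma ConvexOn.monotoneOn_Ici (hf : ConvexOn 𝕜 (Ici a) f) (hmin : ∀ x, f a ≤ f x) :
    MonotoneOn f (Ici a) := by
  intro u hu v _ huv
  obtain rfl | hau := eq_or_lt_of_le (mem_Ici.1 hu)
  · exact hmin v
  obtain rfl | huv := eq_or_lt_of_le huv
  · rfl
  have hslope := hf.slope_mono_adjacent self_mem_Ici (hau.trans huv).le hau huv
  have : 0 ≤ (f u - f a) / (u - a) := div_nonneg (sub_nonneg.2 (hmin u)) (sub_pos.2 hau).le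
  have := (le_div_iff₀ (sub_pos.2 huv)).1 (this.trans hslope)
  linarith

lemma ConvexOn.antitoneOn_Iic (hf : ConvexOn 𝕜 (Iic a) f) (hmin : ∀ x, f a ≤ f x) :
    AntitoneOn f (Iic a) := by
  intro u _ v hv huv
  obtain rfl | hva := eq_or_lt_of_le (mem_Iic.1 hv)
  · exact hmin u
  obtain rfl | huv := eq_or_lt_of_le huv
  · rfl
  have hslope := hf.slope_mono_adjacent (huv.trans hva).le self_mem_Iic huv hva
  have : (f a - f v) / (a - v) ≤ 0 :=
    div_nonpos_of_nonpos_of_nonneg (sub_nonpos.2 (hmin v)) (sub_pos.2 hva).le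
  have := (div_le_iff₀ (sub_pos.2 huv)).1 (hslope.trans this)
  linarith

theorem convexOn_univ_of_convexOn_Iic_of_convexOn_Ici {c : 𝕜} (hl : ConvexOn 𝕜 (Iic a) f)
    (hr : ConvexOn 𝕜 (Ici a) f) (hc : ∀ x, f a + c * (x - a) ≤ f x) :
    ConvexOn 𝕜 univ f := by
  -- Subtracting the supporting line makes `a` a global minimum, so `f - ℓ` is antitone on the
  -- left half-line and monotone on the right one.
  let ℓ : 𝕜 →ₗ[𝕜] 𝕜 := LinearMap.mul 𝕜 𝕜 c
  have hmin : ∀ x, (f - ℓ) a ≤ (f - ℓ) x := fun x => by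
    simp only [Pi.sub_apply, ℓ, LinearMap.mul_apply']
    linarith [hc x]
  have hl' := hl.sub (ℓ.concaveOn hl.1)
  have hr' := hr.sub (ℓ.concaveOn hr.1)
  have := convexOn_univ_piecewise_Iic_of_antitoneOn_Iic_monotoneOn_Ici hl' hr'
    (hl'.antitoneOn_Iic hmin) (hr'.monotoneOn_Ici hmin) rfl
  rw [piecewise_same] at this
  simpa using this.add (ℓ.convexOn convex_univ)

end Convexity

theorem ConvexOn.integral {α E : Type*} [MeasurableSpace α] {μ : Measure α} [AddCommGroup E]
    [Module ℝ E] {s : Set E} {f : α → E → ℝ} (hs : Convex ℝ s)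
    (hf : ∀ᵐ u ∂μ, ConvexOn ℝ s (f u)) (hint : ∀ x ∈ s, Integrable (f · x) μ) :
    ConvexOn ℝ s fun x => ∫ u, f u x ∂μ := by
  refine ⟨hs, fun x hx y hy a b ha hb hab => ?_⟩
  have hx' := (hint x hx).const_mul a
  have hy' := (hint y hy).const_mul b
  calc ∫ u, f u (a • x + b • y) ∂μ ≤ ∫ u, (a * f u x + b * f u y) ∂μ :=
        integral_mono_ae (hint _ (hs hx hy ha hb hab)) (hx'.add hy')
          (hf.mono fun u hu => hu.2 hx hy ha hb hab)
    _ = a • ∫ u, f u x ∂μ + b • ∫ u, f u y ∂μ := by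
        rw [integral_add hx' hy', integral_const_mul, integral_const_mul]
        rfl

namespace Real

lemma exp_sub_one_ne_zero {v : ℝ} (hv : v ≠ 0) : exp v - 1 ≠ 0 :=
  sub_ne_zero.2 (mt (exp_eq_one_iff v).1 hv)

lemma one_sub_exp_neg_div_pos {v : ℝ} (hv : v ≠ 0) : 0 < (1 - exp (-v)) / v := by
  rcases hv.lt_or_gt with h | h
  · exact div_pos_of_neg_of_neg (by linarith [one_lt_exp_iff.2 (neg_pos.2 h)]) h
  · exact div_pos (by linarith [exp_lt_one_iff.2 (neg_neg_iff_pos.2 h)]) h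

lemma monotone_mul_exp_add_one_sub_two_mul_exp_sub_one :
    Monotone fun v : ℝ => v * (exp v + 1) - 2 * (exp v - 1) := by
  have hderiv (v : ℝ) : HasDerivAt (fun v : ℝ => v * (exp v + 1) - 2 * (exp v - 1))
      (v * exp v - exp v + 1) v := by
    refine (((hasDerivAt_id v).mul ((hasDerivAt_exp v).add_const 1)).sub
      (((hasDerivAt_exp v).sub_const 1).const_mul 2)).congr_deriv ?_
    simp only [id]
    ring
  refine monotone_of_hasDerivAt_nonneg hderiv fun v => show (0 : ℝ) ≤ _ from ?_
  -- `e^{-v} ≥ 1 - v`, multiplied by `e^v`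
  have h := mul_le_mul_of_nonneg_left (add_one_le_exp (-v)) (exp_pos v).le
  rw [← exp_add, add_neg_cancel, exp_zero] at h
  linarith

lemma mul_exp_add_one_sub_two_mul_exp_sub_one_mul_nonneg (v : ℝ) :
    0 ≤ (v * (exp v + 1) - 2 * (exp v - 1)) * (exp v - 1) := by
  rcases le_total 0 v with hv | hv
  · have := monotone_mul_exp_add_one_sub_two_mul_exp_sub_one hv
    simp only [zero_mul, exp_zero] at this
    exact mul_nonneg (by linarith) (by linarith [add_one_le_exp v])
  · have := monotone_mul_exp_add_one_sub_two_mul_exp_sub_one hv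
    simp only [zero_mul, exp_zero] at this
    exact mul_nonneg_of_nonpos_of_nonpos (by linarith) (by linarith [exp_le_one_iff.2 hv])

end Real

/-- The exponential generating function `v / (e^v - 1)` of the Bernoulli numbers. -/
noncomputable def bernoulliGenFun (v : ℝ) : ℝ := if v = 0 then 1 else v / (exp v - 1)

lemma bernoulliGenFun_zero : bernoulliGenFun 0 = 1 := if_pos rfl

lemma bernoulliGenFun_of_ne_zero {v : ℝ} (hv : v ≠ 0) : bernoulliGenFun v = v / (exp v - 1) :=
  if_neg hv

lemma bernoulliGenFun_eq_inv_dslope : bernoulliGenFun = fun v => (dslope exp 0 v)⁻¹ := by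
  funext v
  obtain rfl | hv := eq_or_ne v 0
  · simp [bernoulliGenFun_zero]
  · rw [bernoulliGenFun_of_ne_zero hv, dslope_of_ne _ hv, slope_def_field, exp_zero, sub_zero,
      inv_div]

lemma continuous_bernoulliGenFun : Continuous bernoulliGenFun := by
  rw [bernoulliGenFun_eq_inv_dslope]
  refine (continuousOn_univ.1 ((continuousOn_dslope univ_mem).2
    ⟨continuous_exp.continuousOn, differentiableAt_exp⟩)).inv₀ fun v => ?_
  obtain rfl | hv := eq_or_ne v 0
  · simp
  · rw [dslope_of_ne _ hv, slope_def_field, exp_zero, sub_zero]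
    exact div_ne_zero (exp_sub_one_ne_zero hv) hv

lemma one_sub_half_le_bernoulliGenFun (v : ℝ) : 1 - v / 2 ≤ bernoulliGenFun v := by
  obtain rfl | hv := eq_or_ne v 0
  · simp [bernoulliGenFun_zero]
  have hE := exp_sub_one_ne_zero hv
  have key : bernoulliGenFun v - (1 - v / 2) =
      (v * (exp v + 1) - 2 * (exp v - 1)) * (exp v - 1) / (2 * (exp v - 1) ^ 2) := by
    rw [bernoulliGenFun_of_ne_zero hv]
    field_simp
    ring
  have := mul_exp_add_one_sub_two_mul_exp_sub_one_mul_nonneg v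
  rw [← sub_nonneg, key]
  positivity

lemma hasDerivAt_bernoulliGenFun {v : ℝ} (hv : v ≠ 0) :
    HasDerivAt bernoulliGenFun ((exp v - 1 - v * exp v) / (exp v - 1) ^ 2) v := by
  have heq : bernoulliGenFun =ᶠ[𝓝 v] fun w => w / (exp w - 1) := by
    filter_upwards [isOpen_ne.mem_nhds hv] with w hw using bernoulliGenFun_of_ne_zero hw
  refine HasDerivAt.congr_of_eventuallyEq ?_ heq
  refine ((hasDerivAt_id v).div ((hasDerivAt_exp v).sub_const 1)
    (exp_sub_one_ne_zero hv)).congr_deriv ?_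
  simp only [id]
  ring

lemma hasDerivAt_deriv_bernoulliGenFun {v : ℝ} (hv : v ≠ 0) :
    HasDerivAt (deriv bernoulliGenFun)
      (exp v * ((v * (exp v + 1) - 2 * (exp v - 1)) * (exp v - 1)) / (exp v - 1) ^ 4) v := by
  have hderiv : deriv bernoulliGenFun =ᶠ[𝓝 v]
      fun w => (exp w - 1 - w * exp w) / (exp w - 1) ^ 2 := by
    filter_upwards [isOpen_ne.mem_nhds hv] with w hw using (hasDerivAt_bernoulliGenFun hw).deriv
  refine HasDerivAt.congr_of_eventuallyEq ?_ hderiv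
  have hE := exp_sub_one_ne_zero hv
  refine ((((hasDerivAt_exp v).sub_const 1).fun_sub ((hasDerivAt_id' v).fun_mul
    (hasDerivAt_exp v))).fun_div (((hasDerivAt_exp v).sub_const 1).fun_pow 2)
    (pow_ne_zero 2 hE)).congr_deriv ?_
  field_simp
  ring

lemma convexOn_bernoulliGenFun_of_zero_notMem_interior {D : Set ℝ} (hD : Convex ℝ D)
    (h0 : 0 ∉ interior D) : ConvexOn ℝ D bernoulliGenFun := by
  have hne {v : ℝ} (hv : v ∈ interior D) : v ≠ 0 := ne_of_mem_of_not_mem hv h0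
  refine convexOn_of_hasDerivWithinAt2_nonneg hD continuous_bernoulliGenFun.continuousOn
    (f' := deriv bernoulliGenFun)
    (fun v hv => (hasDerivAt_bernoulliGenFun (hne hv)).differentiableAt.hasDerivAt
      |>.hasDerivWithinAt)
    (fun v hv => (hasDerivAt_deriv_bernoulliGenFun (hne hv)).hasDerivWithinAt) fun v _ => ?_
  have := mul_exp_add_one_sub_two_mul_exp_sub_one_mul_nonneg v
  positivity

theorem convexOn_bernoulliGenFun : ConvexOn ℝ univ bernoulliGenFun := by
  refine convexOn_univ_of_convexOn_Iic_of_convexOn_Ici (a := 0) (c := -1 / 2)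
    (convexOn_bernoulliGenFun_of_zero_notMem_interior (convex_Iic 0) (by simp))
    (convexOn_bernoulliGenFun_of_zero_notMem_interior (convex_Ici 0) (by simp)) fun v => ?_
  have := one_sub_half_le_bernoulliGenFun v
  rw [bernoulliGenFun_zero]
  linarith

lemma intervalIntegrable_bernoulliGenFun_mul_sub_one_div {a b : ℝ} (ha : 0 < a) (hb : 0 < b)
    (t : ℝ) : IntervalIntegrable (fun u => (bernoulliGenFun (u * t) - 1) / u) volume a b := by
  refine ContinuousOn.intervalIntegrable ?_
  exact (((continuous_bernoulliGenFun.comp (continuous_id.mul continuous_const)).sub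
    continuous_const).continuousOn.div continuousOn_id) fun u hu =>
      ((lt_min ha hb).trans_le hu.1).ne'

lemma convexOn_bernoulliGenFun_mul_sub_one_div {u : ℝ} (hu : 0 < u) :
    ConvexOn ℝ univ fun t => (bernoulliGenFun (u * t) - 1) / u := by
  have := ((convexOn_bernoulliGenFun.comp_linearMap (LinearMap.mul ℝ ℝ u)).add_const (-1)).smul
    (inv_nonneg.2 hu.le)
  refine this.congr fun t _ => ?_
  simp [div_eq_inv_mul, sub_eq_add_neg]

lemma convexOn_integral_bernoulliGenFun_mul_sub_one_div {a b : ℝ} (ha : 0 < a) (hab : a ≤ b) :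
    ConvexOn ℝ univ fun t => ∫ u in a..b, (bernoulliGenFun (u * t) - 1) / u := by
  simp_rw [intervalIntegral.integral_of_le hab]
  refine ConvexOn.integral convex_univ ?_ fun t _ =>
    (intervalIntegrable_bernoulliGenFun_mul_sub_one_div ha (ha.trans_le hab) t).1
  filter_upwards [ae_restrict_mem measurableSet_Ioc] with u hu
  exact convexOn_bernoulliGenFun_mul_sub_one_div (ha.trans hu.1)

lemma hasDerivAt_log_one_sub_exp_neg_div {v : ℝ} (hv : v ≠ 0) :
    HasDerivAt (fun w => log ((1 - exp (-w)) / w)) ((bernoulliGenFun v - 1) / v) v := by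
  have hN : HasDerivAt (fun w => 1 - exp (-w)) (exp (-v)) v := by
    simpa using ((hasDerivAt_neg v).exp).const_sub 1
  refine ((hN.fun_div (hasDerivAt_id' v) hv).log (one_sub_exp_neg_div_pos hv).ne').congr_deriv ?_
  have hE := exp_sub_one_ne_zero hv
  rw [bernoulliGenFun_of_ne_zero hv, exp_neg]
  field_simp

lemma hasDerivAt_log_one_sub_exp_neg_mul_div {u t : ℝ} (hu : u ≠ 0) (ht : t ≠ 0) :
    HasDerivAt (fun u => log ((1 - exp (-(u * t))) / (u * t)))
      ((bernoulliGenFun (u * t) - 1) / u) u := by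
  refine ((hasDerivAt_log_one_sub_exp_neg_div (mul_ne_zero hu ht)).comp u
    (hasDerivAt_mul_const t)).congr_deriv ?_
  field_simp

lemma integral_bernoulliGenFun_mul_sub_one_div {s t : ℝ} (hs : 0 < s) (ht : t ≠ 0) :
    ∫ u in 1..s, (bernoulliGenFun (u * t) - 1) / u =
      log ((1 - exp (-(s * t))) / (s * t)) - log ((1 - exp (-t)) / t) := by
  rw [intervalIntegral.integral_eq_sub_of_hasDerivAt
    (fun u hu => hasDerivAt_log_one_sub_exp_neg_mul_div
      ((lt_min one_pos hs).trans_le hu.1).ne' ht)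
    (intervalIntegrable_bernoulliGenFun_mul_sub_one_div one_pos hs t), one_mul]

lemma log_eq_integral_bernoulliGenFun {α β : ℝ} (hs : 0 < β - α) (t : ℝ) :
    log (if t = 0 then β - α else (exp (-α * t) - exp (-β * t)) / (1 - exp (-t))) =
      -α * t + log (β - α) + ∫ u in 1..(β - α), (bernoulliGenFun (u * t) - 1) / u := by
  obtain rfl | ht := eq_or_ne t 0
  · simp [bernoulliGenFun_zero]
  set s := β - α
  have hA := one_sub_exp_neg_div_pos (mul_ne_zero hs.ne' ht)
  have hB := one_sub_exp_neg_div_pos ht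
  have hQ : (exp (-α * t) - exp (-β * t)) / (1 - exp (-t)) =
      exp (-α * t) * (s * ((1 - exp (-(s * t))) / (s * t) / ((1 - exp (-t)) / t))) := by
    rw [show -β * t = -α * t + -(s * t) by ring, exp_add]
    field_simp
  rw [if_neg ht, hQ, log_mul (exp_ne_zero _) (by positivity), log_exp,
    log_mul hs.ne' (by positivity), log_div hA.ne' hB.ne',
    integral_bernoulliGenFun_mul_sub_one_div hs ht]
  ring

theorem stmt4_general (α β : ℝ) :
    (β - α > 1 → ConvexOn ℝ Set.univ (fun t => Real.log ((fun t : ℝ => if t = 0 then β - α else (Real.exp (-α*t) - Real.exp (-β*t)) / (1 - Real.exp (-t))) t))) ∧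
    (0 < β - α ∧ β - α < 1 → ConcaveOn ℝ Set.univ (fun t => Real.log ((fun t : ℝ => if t = 0 then β - α else (Real.exp (-α*t) - Real.exp (-β*t)) / (1 - Real.exp (-t))) t))) := by
  have haffine : ConvexOn ℝ univ (fun t => -α * t + log (β - α)) ∧
      ConcaveOn ℝ univ (fun t => -α * t + log (β - α)) :=
    ⟨((LinearMap.mul ℝ ℝ (-α)).convexOn convex_univ).add_const _,
      ((LinearMap.mul ℝ ℝ (-α)).concaveOn convex_univ).add_const _⟩
  refine ⟨fun hs => ?_, fun ⟨hs, hs1⟩ => ?_⟩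
  · refine (haffine.1.add (convexOn_integral_bernoulliGenFun_mul_sub_one_div one_pos hs.le)).congr
      fun t _ => (log_eq_integral_bernoulliGenFun (one_pos.trans hs) t).symm
  · refine (haffine.2.add (convexOn_integral_bernoulliGenFun_mul_sub_one_div hs hs1.le).neg).congr
      fun t _ => ?_
    rw [log_eq_integral_bernoulliGenFun hs t, intervalIntegral.integral_symm]
    rfl

theorem stmt4 (α β : ℝ) (hab : α ≠ β) (h01 : (α, β) ≠ (0, 1)) (h10 : (α, β) ≠ (1, 0)) :
    (β - α > 1 → ConvexOn ℝ Set.univ (fun t => Real.log ((fun t : ℝ => if t = 0 then β - α else (Real.exp (-α*t) - Real.exp (-β*t)) / (1 - Real.exp (-t))) t))) ∧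
    (0 < β - α ∧ β - α < 1 → ConcaveOn ℝ Set.univ (fun t => Real.log ((fun t : ℝ => if t = 0 then β - α else (Real.exp (-α*t) - Real.exp (-β*t)) / (1 - Real.exp (-t))) t))) :=
  stmt4_general α β
end

section
/- For positive reals r, s, u, v with r ≠ s and u ≠ v, if ln(r/s)/ln(u/v) > 1, then the function P(t) = (r^t - s^t)/(u^t - v^t) for t ≠ 0, with P(0) = (ln r - ln s)/(ln u - ln v), is logarithmically convex on ℝ; if 0 < ln(r/s)/ln(u/v) < 1, it is logarithmically concave on ℝ. -/
/-!
Put `a = log r`, `b = log s`, `c = log u`, `d = log v`, `α = (a - b) / 2`, `β = (c - d) / 2`.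
Since `eˣ - eʸ = 2 e^((x + y) / 2) sinh ((x - y) / 2)`, we get
`P(t) = e^(m t) · sinh (α t) / sinh (β t)` for a constant `m`, and
`α / β = ln (r / s) / ln (u / v)`. So `ln P` is a linear function plus
`L(t) = ln (sinh (α t) / sinh (β t))`, extended by `ln (α / β)` at `0`.

If `0 < β ≤ α` (the case `α / β ≥ 1` up to the sign of both), `L` is even, and it is convex
on `[0, ∞)` because `L'' = (β / sinh (β t))² - (α / sinh (α t))² ≥ 0`: indeed
`α sinh (β t) ≤ β sinh (α t)` by convexity of `sinh` on `[0, ∞)`. The same inequality says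
that `L` is minimal at `0`, and an even function that is convex on `[0, ∞)` with its minimum
at `0` is `L ∘ |·|`, hence convex. For `0 < α / β < 1`, `L` is minus the function obtained by
exchanging `α` and `β`.
-/

open Real Set Filter Topology

namespace Real

lemma convexOn_sinh_Ici : ConvexOn ℝ (Ici 0) sinh := by
  refine MonotoneOn.convexOn_of_deriv (convex_Ici 0) continuous_sinh.continuousOn
    differentiable_sinh.differentiableOn ?_
  rw [deriv_sinh, interior_Ici]
  intro x hx y hy hxy
  exact cosh_le_cosh.2 (by rwa [abs_of_pos hx, abs_of_pos (mem_Ioi.1 hx |>.trans_le hxy)])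

lemma sinh_mul_le_mul_sinh {θ x : ℝ} (hθ₀ : 0 ≤ θ) (hθ₁ : θ ≤ 1) (hx : 0 ≤ x) :
    sinh (θ * x) ≤ θ * sinh x := by
  simpa using convexOn_sinh_Ici.2 (mem_Ici.2 hx) (mem_Ici.2 le_rfl) hθ₀ (sub_nonneg.2 hθ₁)
    (add_sub_cancel θ 1)

lemma mul_sinh_mul_le_mul_sinh_mul {α β t : ℝ} (hβ : 0 ≤ β) (hβα : β ≤ α)
    (ht : 0 ≤ t) : α * sinh (β * t) ≤ β * sinh (α * t) := by
  rcases hβ.eq_or_lt with rfl | hβ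
  · simp
  have hα : 0 < α := hβ.trans_le hβα
  have h := sinh_mul_le_mul_sinh (div_nonneg hβ.le hα.le) ((div_le_one hα).2 hβα)
    (mul_nonneg hα.le ht)
  rw [div_mul_eq_mul_div, mul_div_assoc, mul_div_cancel_left₀ t hα.ne', div_mul_eq_mul_div,
    le_div_iff₀ hα] at h
  linarith

lemma hasDerivAt_log_sinh_mul {γ t : ℝ} (h : sinh (γ * t) ≠ 0) :
    HasDerivAt (fun t => log (sinh (γ * t))) (γ * cosh (γ * t) / sinh (γ * t)) t := by
  convert (((hasDerivAt_id' t).const_mul γ).sinh).log h using 1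
  ring

lemma hasDerivAt_mul_cosh_mul_div_sinh_mul {γ t : ℝ} (h : sinh (γ * t) ≠ 0) :
    HasDerivAt (fun t => γ * cosh (γ * t) / sinh (γ * t)) (-(γ / sinh (γ * t)) ^ 2) t := by
  have hl := (hasDerivAt_id' t).const_mul γ
  have hd : HasDerivAt (fun t => γ * cosh (γ * t) / sinh (γ * t)) _ t :=
    (hl.cosh.const_mul γ).div hl.sinh h
  convert hd using 1
  field_simp
  rw [cosh_sq]
  ring

lemma tendsto_sinh_mul_div_self (γ : ℝ) :
    Tendsto (fun t => sinh (γ * t) / t) (𝓝[≠] 0) (𝓝 γ) := by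
  have h : HasDerivAt (fun t => sinh (γ * t)) γ 0 := by
    simpa using ((hasDerivAt_id 0).const_mul γ).sinh
  refine (hasDerivAt_iff_tendsto_slope.1 h).congr fun t => ?_
  simp [slope_def_field]

lemma exp_sub_exp (x y : ℝ) : exp x - exp y = 2 * exp ((x + y) / 2) * sinh ((x - y) / 2) := by
  rw [sinh_eq, mul_comm 2, mul_assoc, mul_div_cancel₀ _ two_ne_zero, mul_sub, ← exp_add,
    ← exp_add]
  ring_nf

lemma rpow_sub_rpow {r s : ℝ} (hr : 0 < r) (hs : 0 < s) (t : ℝ) :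
    r ^ t - s ^ t = 2 * exp ((log r + log s) / 2 * t) * sinh ((log r - log s) / 2 * t) := by
  rw [rpow_def_of_pos hr, rpow_def_of_pos hs, exp_sub_exp]
  ring_nf

end Real

lemma ConvexOn.univ_of_even {f : ℝ → ℝ} (hf : ConvexOn ℝ (Ici 0) f)
    (heven : Function.Even f) (hmin : ∀ x, 0 ≤ x → f 0 ≤ f x) : ConvexOn ℝ univ f := by
  have hmono : MonotoneOn f (Ici 0) := by
    intro x hx y hy hxy
    rcases (mem_Ici.1 hx).eq_or_lt with rfl | hx
    · exact hmin y hy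
    · exact hf.le_right_of_left_le'' self_mem_Ici hy hx hxy (hmin x hx.le)
  have himage : (fun x : ℝ => ‖x‖) '' univ = Ici 0 := by
    ext x
    exact ⟨by rintro ⟨y, -, rfl⟩; exact norm_nonneg y,
      fun hx => ⟨x, mem_univ x, Real.norm_of_nonneg hx⟩⟩
  have hcomp : f ∘ (fun x : ℝ => ‖x‖) = f := funext fun x => by
    rcases abs_choice x with h | h <;> simp [h, heven x]
  rw [← hcomp]
  exact (himage ▸ hf).comp (convexOn_norm convex_univ) (himage ▸ hmono)

noncomputable def sinhRatio (α β t : ℝ) : ℝ :=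
  if t = 0 then α / β else sinh (α * t) / sinh (β * t)

section sinhRatio

variable {α β : ℝ}

lemma sinhRatio_zero : sinhRatio α β 0 = α / β := if_pos rfl

lemma sinhRatio_of_ne_zero {t : ℝ} (ht : t ≠ 0) :
    sinhRatio α β t = sinh (α * t) / sinh (β * t) := if_neg ht

lemma sinhRatio_ne_zero (hα : α ≠ 0) (hβ : β ≠ 0) (t : ℝ) : sinhRatio α β t ≠ 0 := by
  rcases eq_or_ne t 0 with rfl | ht
  · simpa [sinhRatio_zero] using ⟨hα, hβ⟩
  · rw [sinhRatio_of_ne_zero ht]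
    exact div_ne_zero (by simp [hα, ht]) (by simp [hβ, ht])

lemma sinhRatio_even : Function.Even (sinhRatio α β) := by
  intro t
  rcases eq_or_ne t 0 with rfl | ht
  · rw [neg_zero]
  · rw [sinhRatio_of_ne_zero ht, sinhRatio_of_ne_zero (neg_ne_zero.2 ht), mul_neg, mul_neg,
      sinh_neg, sinh_neg, neg_div_neg_eq]

lemma sinhRatio_neg_neg : sinhRatio (-α) (-β) = sinhRatio α β := by
  ext t
  simp only [sinhRatio, neg_mul, sinh_neg, neg_div_neg_eq]

lemma inv_sinhRatio (t : ℝ) : (sinhRatio α β t)⁻¹ = sinhRatio β α t := by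
  simp only [sinhRatio, apply_ite Inv.inv, inv_div]

lemma continuous_sinhRatio (hβ : β ≠ 0) : Continuous (sinhRatio α β) := by
  refine continuous_iff_continuousAt.2 fun t => ?_
  rcases eq_or_ne t 0 with rfl | ht
  · rw [← continuousWithinAt_compl_self, ContinuousWithinAt, sinhRatio_zero]
    refine ((tendsto_sinh_mul_div_self α).div (tendsto_sinh_mul_div_self β) hβ).congr' ?_
    filter_upwards [self_mem_nhdsWithin] with t ht
    rw [sinhRatio_of_ne_zero ht, Pi.div_apply, div_div_div_cancel_right₀ ht]
  · have hs : sinh (β * t) ≠ 0 := by simp [hβ, ht]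
    refine ((by fun_prop : Continuous fun t => sinh (α * t)).continuousAt.div
      (by fun_prop : Continuous fun t => sinh (β * t)).continuousAt hs).congr ?_
    filter_upwards [isOpen_ne.mem_nhds ht] with s hs
    rw [sinhRatio_of_ne_zero hs, Pi.div_apply]

lemma convexOn_Ici_log_sinhRatio (hβ : 0 < β) (hβα : β ≤ α) :
    ConvexOn ℝ (Ici 0) (fun t => log (sinhRatio α β t)) := by
  have hα : 0 < α := hβ.trans_le hβα
  have hsinh : ∀ γ > 0, ∀ t > 0, 0 < sinh (γ * t) := fun γ hγ t ht =>
    sinh_pos_iff.2 (mul_pos hγ ht)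
  set g := fun t => α * cosh (α * t) / sinh (α * t) - β * cosh (β * t) / sinh (β * t)
  have hderiv : ∀ t ∈ Ioi (0 : ℝ), HasDerivAt (fun t => log (sinhRatio α β t)) (g t) t := by
    intro t ht
    refine ((hasDerivAt_log_sinh_mul (hsinh α hα t ht).ne').sub
      (hasDerivAt_log_sinh_mul (hsinh β hβ t ht).ne')).congr_of_eventuallyEq ?_
    filter_upwards [Ioi_mem_nhds ht] with s hs
    rw [sinhRatio_of_ne_zero hs.ne', log_div (hsinh α hα s hs).ne' (hsinh β hβ s hs).ne',
      Pi.sub_apply]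
  have hg : ∀ t ∈ Ioi (0 : ℝ),
      HasDerivAt g (-(α / sinh (α * t)) ^ 2 - -(β / sinh (β * t)) ^ 2) t := fun t ht =>
    (hasDerivAt_mul_cosh_mul_div_sinh_mul (hsinh α hα t ht).ne').sub
      (hasDerivAt_mul_cosh_mul_div_sinh_mul (hsinh β hβ t ht).ne')
  have hg_mono : MonotoneOn g (Ioi 0) := by
    refine monotoneOn_of_hasDerivWithinAt_nonneg (convex_Ioi 0)
      (f' := fun t => -(α / sinh (α * t)) ^ 2 - -(β / sinh (β * t)) ^ 2)
      (fun t ht => (hg t ht).continuousAt.continuousWithinAt) ?_ ?_ <;> rw [interior_Ioi]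
    · exact fun t ht => (hg t ht).hasDerivWithinAt
    · intro t ht
      have h : α / sinh (α * t) ≤ β / sinh (β * t) := by
        rw [div_le_div_iff₀ (hsinh α hα t ht) (hsinh β hβ t ht)]
        exact mul_sinh_mul_le_mul_sinh_mul hβ.le hβα ht.le
      have h₀ : 0 ≤ α / sinh (α * t) := (div_pos hα (hsinh α hα t ht)).le
      nlinarith
  refine MonotoneOn.convexOn_of_deriv (convex_Ici 0)
    ((continuous_sinhRatio hβ.ne').log (sinhRatio_ne_zero hα.ne' hβ.ne')).continuousOn ?_ ?_ <;>
    rw [interior_Ici]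
  · exact fun t ht => (hderiv t ht).differentiableAt.differentiableWithinAt
  · exact hg_mono.congr fun t ht => (hderiv t ht).deriv.symm

lemma convexOn_log_sinhRatio_of_pos (hβ : 0 < β) (hβα : β ≤ α) :
    ConvexOn ℝ univ (fun t => log (sinhRatio α β t)) := by
  refine (convexOn_Ici_log_sinhRatio hβ hβα).univ_of_even
    (fun t => by simp only [sinhRatio_even t]) fun t ht => ?_
  rcases ht.eq_or_lt with rfl | ht
  · exact le_rfl
  have hα : 0 < α := hβ.trans_le hβα
  have hsβ : 0 < sinh (β * t) := sinh_pos_iff.2 (mul_pos hβ ht)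
  rw [sinhRatio_zero, sinhRatio_of_ne_zero ht.ne']
  refine log_le_log (div_pos hα hβ) ((div_le_div_iff₀ hβ hsβ).2 ?_)
  rw [mul_comm (sinh _)]
  exact mul_sinh_mul_le_mul_sinh_mul hβ.le hβα ht.le

lemma convexOn_log_sinhRatio (h : 1 ≤ α / β) :
    ConvexOn ℝ univ (fun t => log (sinhRatio α β t)) := by
  rcases lt_trichotomy β 0 with hβ | rfl | hβ
  · rw [← sinhRatio_neg_neg]
    rw [← neg_div_neg_eq] at h
    exact convexOn_log_sinhRatio_of_pos (neg_pos.2 hβ) ((one_le_div (neg_pos.2 hβ)).1 h)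
  · rw [div_zero] at h
    linarith
  · exact convexOn_log_sinhRatio_of_pos hβ ((one_le_div hβ).1 h)

lemma concaveOn_log_sinhRatio (h₀ : 0 < α / β) (h₁ : α / β ≤ 1) :
    ConcaveOn ℝ univ (fun t => log (sinhRatio α β t)) := by
  have h : 1 ≤ β / α := by
    rw [← inv_div]
    exact (one_le_inv₀ h₀).2 h₁
  have heq : (fun t => log (sinhRatio α β t)) = -fun t => log (sinhRatio β α t) := by
    ext t
    rw [Pi.neg_apply, ← log_inv, inv_sinhRatio]
  rw [heq]
  exact (convexOn_log_sinhRatio h).neg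

end sinhRatio

noncomputable def powDiffRatio (r s u v t : ℝ) : ℝ :=
  if t = 0 then (log r - log s) / (log u - log v) else (r ^ t - s ^ t) / (u ^ t - v ^ t)

section powDiffRatio

variable {r s u v : ℝ}

lemma powDiffRatio_eq (hr : 0 < r) (hs : 0 < s) (hu : 0 < u) (hv : 0 < v) (t : ℝ) :
    powDiffRatio r s u v t = exp (((log r + log s) / 2 - (log u + log v) / 2) * t) *
      sinhRatio ((log r - log s) / 2) ((log u - log v) / 2) t := by
  rcases eq_or_ne t 0 with rfl | ht
  · rw [powDiffRatio, if_pos rfl, sinhRatio_zero, mul_zero, exp_zero, one_mul,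
      div_div_div_cancel_right₀ two_ne_zero]
  · rw [powDiffRatio, if_neg ht, sinhRatio_of_ne_zero ht, rpow_sub_rpow hr hs,
      rpow_sub_rpow hu hv, mul_div_mul_comm, mul_div_mul_left _ _ two_ne_zero, ← exp_sub,
      sub_mul]

lemma log_powDiffRatio (hr : 0 < r) (hs : 0 < s) (hu : 0 < u) (hv : 0 < v) (hrs : r ≠ s)
    (huv : u ≠ v) (t : ℝ) :
    log (powDiffRatio r s u v t) = ((log r + log s) / 2 - (log u + log v) / 2) * t +
      log (sinhRatio ((log r - log s) / 2) ((log u - log v) / 2) t) := by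
  have hlog {x y : ℝ} (hx : 0 < x) (hy : 0 < y) (hxy : x ≠ y) : (log x - log y) / 2 ≠ 0 :=
    div_ne_zero (sub_ne_zero.2 fun h => hxy (log_injOn_pos hx hy h)) two_ne_zero
  rw [powDiffRatio_eq hr hs hu hv,
    log_mul (exp_ne_zero _) (sinhRatio_ne_zero (hlog hr hs hrs) (hlog hu hv huv) t), log_exp]

end powDiffRatio

theorem stmt17 (r s u v : ℝ) (hr : 0 < r) (hs : 0 < s) (hu : 0 < u) (hv : 0 < v) (hrs : r ≠ s) (huv : u ≠ v) :
    (Real.log (r/s) / Real.log (u/v) > 1 → ConvexOn ℝ Set.univ (fun t => Real.log ((fun t : ℝ => if t = 0 then (Real.log r - Real.log s)/(Real.log u - Real.log v) else (r ^ t - s ^ t) / (u ^ t - v ^ t)) t))) ∧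
    (0 < Real.log (r/s) / Real.log (u/v) ∧ Real.log (r/s) / Real.log (u/v) < 1 →
      ConcaveOn ℝ Set.univ (fun t => Real.log ((fun t : ℝ => if t = 0 then (Real.log r - Real.log s)/(Real.log u - Real.log v) else (r ^ t - s ^ t) / (u ^ t - v ^ t)) t))) := by
  change (_ → ConvexOn ℝ univ fun t => log (powDiffRatio r s u v t)) ∧
    (_ → ConcaveOn ℝ univ fun t => log (powDiffRatio r s u v t))
  have hratio : log (r / s) / log (u / v) = (log r - log s) / 2 / ((log u - log v) / 2) := by
    rw [log_div hr.ne' hs.ne', log_div hu.ne' hv.ne', div_div_div_cancel_right₀ two_ne_zero]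
  simp only [log_powDiffRatio hr hs hu hv hrs huv, hratio]
  set m := (log r + log s) / 2 - (log u + log v) / 2
  have hlin : ConvexOn ℝ univ (fun t => m * t) ∧ ConcaveOn ℝ univ (fun t => m * t) :=
    ⟨(LinearMap.mul ℝ ℝ m).convexOn convex_univ,
      (LinearMap.mul ℝ ℝ m).concaveOn convex_univ⟩
  exact ⟨fun h => hlin.1.add (convexOn_log_sinhRatio h.le),
    fun h => hlin.2.add (concaveOn_log_sinhRatio h.1 h.2.le)⟩
end

section
/- The function Q(t) = (e^{-αt} - e^{-βt})/(1 - e^{-t}) for t ≠ 0, with Q(0) = β - α, where β > α and β - α ≠ 1, is neither 4-log-convex nor 4-log-concave on (0, ∞); that is, the fourth derivative of ln Q changes sign on (0, ∞). -/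
/-!
For `t > 0` and `c = β - α > 0` we have `log Q t = -α t + L (c t) - L t` with
`L s = log (1 - e^{-s})`, hence `(log Q)'''' t = (ψ t - ψ (c t)) / t ^ 4` where
`ψ s = -s ^ 4 L'''' s` (`scaledNegDeriv4`). The function `ψ` is positive, tends to `6` at `0⁺`
and to `0` at `+∞`, and `ψ 2 > 6`. So for every `r ∈ (0, 1) ∪ (1, ∞)` some `t > 0` has
`ψ (r t) < ψ t`: otherwise `n ↦ ψ (r ^ n s)` would be nondecreasing while converging to a limit
below its initial value (`s = 2` for `r < 1`, `s = 1` for `r > 1`). Taking `r = c` and `r = c⁻¹`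
gives both signs, since `c ≠ 1`.
-/

open Real Filter Set Topology

noncomputable section

theorem exists_succ_lt_of_tendsto {α : Type*} [TopologicalSpace α] [LinearOrder α]
    [OrderClosedTopology α] {u : ℕ → α} {L : α} (hu : Tendsto u atTop (𝓝 L)) (h0 : L < u 0) :
    ∃ n, u (n + 1) < u n := by
  by_contra! h
  exact ((monotone_nat_of_le_succ h).ge_of_tendsto hu 0).not_gt h0

section ComposeWithScaling

variable {ψ : ℝ → ℝ} {r s L : ℝ}

theorem exists_pos_comp_mul_lt_of_tendsto_geom (hr : 0 < r) (hs : 0 < s)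
    (hlim : Tendsto (fun n : ℕ => ψ (r ^ n * s)) atTop (𝓝 L)) (hL : L < ψ s) :
    ∃ t > 0, ψ (r * t) < ψ t := by
  obtain ⟨n, hn⟩ := exists_succ_lt_of_tendsto hlim (by simpa using hL)
  exact ⟨r ^ n * s, by positivity, by simpa only [pow_succ', mul_assoc] using hn⟩

theorem exists_pos_comp_mul_lt_of_tendsto_nhdsGT (hr₀ : 0 < r) (hr₁ : r < 1)
    (hψ : Tendsto ψ (𝓝[>] 0) (𝓝 L)) (hs : 0 < s) (hL : L < ψ s) :
    ∃ t > 0, ψ (r * t) < ψ t := by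
  refine exists_pos_comp_mul_lt_of_tendsto_geom hr₀ hs (hψ.comp ?_) hL
  refine tendsto_nhdsWithin_iff.mpr ⟨?_, .of_forall fun n => mem_Ioi.mpr (by positivity)⟩
  simpa using (tendsto_pow_atTop_nhds_zero_of_lt_one hr₀.le hr₁).mul_const s

theorem exists_pos_comp_mul_lt_of_tendsto_atTop (hr : 1 < r) (hψ : Tendsto ψ atTop (𝓝 L))
    (hs : 0 < s) (hL : L < ψ s) :
    ∃ t > 0, ψ (r * t) < ψ t :=
  exists_pos_comp_mul_lt_of_tendsto_geom (by positivity) hs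
    (hψ.comp ((tendsto_pow_atTop_atTop_of_one_lt hr).atTop_mul_const hs)) hL

end ComposeWithScaling

theorem iteratedDeriv_succ_eqOn {f f' : ℝ → ℝ} {U : Set ℝ} (hU : IsOpen U)
    (h : ∀ x ∈ U, HasDerivAt f (f' x) x) (n : ℕ) :
    EqOn (iteratedDeriv (n + 1) f) (iteratedDeriv n f') U := by
  intro x hx
  rw [iteratedDeriv_succ']
  exact EventuallyEq.iteratedDeriv_eq n <|
    eventually_of_mem (hU.mem_nhds hx) fun y hy => (h y hy).deriv

theorem hasDerivAt_pow_mul_comp_mul_sub {h h' : ℝ → ℝ} {c t : ℝ} (k : ℕ)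
    (hct : HasDerivAt h (h' (c * t)) (c * t)) (ht : HasDerivAt h (h' t) t) :
    HasDerivAt (fun t => c ^ k * h (c * t) - h t) (c ^ (k + 1) * h' (c * t) - h' t) t := by
  refine (((hct.comp t ((hasDerivAt_id t).const_mul c)).const_mul (c ^ k)).sub ht).congr_deriv ?_
  ring

namespace LogOneSubExpNeg

def deriv1 (s : ℝ) : ℝ := exp (-s) / (1 - exp (-s))

def deriv2 (s : ℝ) : ℝ := -exp (-s) / (1 - exp (-s)) ^ 2

def deriv3 (s : ℝ) : ℝ := (exp (-s) + exp (-s) ^ 2) / (1 - exp (-s)) ^ 3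

def negDeriv4 (s : ℝ) : ℝ := (exp (-s) + 4 * exp (-s) ^ 2 + exp (-s) ^ 3) / (1 - exp (-s)) ^ 4

def scaledNegDeriv4 (s : ℝ) : ℝ := s ^ 4 * negDeriv4 s

theorem one_sub_exp_neg_ne_zero {s : ℝ} (hs : s ≠ 0) : 1 - exp (-s) ≠ 0 := by
  rw [sub_ne_zero, ne_comm, Ne, exp_eq_one_iff, neg_eq_zero]
  exact hs

theorem one_sub_exp_neg_pos {s : ℝ} (hs : 0 < s) : 0 < 1 - exp (-s) := by
  simpa using hs

theorem hasDerivAt_exp_neg (s : ℝ) : HasDerivAt (fun s => exp (-s)) (-exp (-s)) s := by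
  simpa using (hasDerivAt_neg s).exp

theorem hasDerivAt_one_sub_exp_neg (s : ℝ) :
    HasDerivAt (fun s => 1 - exp (-s)) (exp (-s)) s := by
  simpa using (hasDerivAt_exp_neg s).const_sub 1

section Derivatives

variable {s : ℝ}

theorem hasDerivAt (hs : s ≠ 0) :
    HasDerivAt (fun s => log (1 - exp (-s))) (deriv1 s) s :=
  (hasDerivAt_one_sub_exp_neg s).log (one_sub_exp_neg_ne_zero hs)

theorem hasDerivAt_deriv1 (hs : s ≠ 0) : HasDerivAt deriv1 (deriv2 s) s := by
  have := one_sub_exp_neg_ne_zero hs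
  refine ((hasDerivAt_exp_neg s).fun_div (hasDerivAt_one_sub_exp_neg s) this).congr_deriv ?_
  rw [deriv2]
  field_simp
  ring

theorem hasDerivAt_deriv2 (hs : s ≠ 0) : HasDerivAt deriv2 (deriv3 s) s := by
  have := one_sub_exp_neg_ne_zero hs
  refine ((hasDerivAt_exp_neg s).fun_neg.fun_div ((hasDerivAt_one_sub_exp_neg s).fun_pow 2)
    (pow_ne_zero 2 this)).congr_deriv ?_
  rw [deriv3]
  field_simp
  ring

theorem hasDerivAt_deriv3 (hs : s ≠ 0) : HasDerivAt deriv3 (-negDeriv4 s) s := by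
  have := one_sub_exp_neg_ne_zero hs
  refine (((hasDerivAt_exp_neg s).fun_add ((hasDerivAt_exp_neg s).fun_pow 2)).fun_div
    ((hasDerivAt_one_sub_exp_neg s).fun_pow 3) (pow_ne_zero 3 this)).congr_deriv ?_
  rw [negDeriv4]
  field_simp
  ring

end Derivatives

theorem scaledNegDeriv4_eq_inv_slope_pow_mul (s : ℝ) : scaledNegDeriv4 s =
    ((1 - exp (-s)) / s)⁻¹ ^ 4 * (exp (-s) + 4 * exp (-s) ^ 2 + exp (-s) ^ 3) := by
  rw [scaledNegDeriv4, negDeriv4, inv_div, div_pow, div_mul_eq_mul_div, mul_div_assoc]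

theorem tendsto_scaledNegDeriv4_nhdsGT : Tendsto scaledNegDeriv4 (𝓝[>] 0) (𝓝 6) := by
  have hslope : Tendsto (fun s => (1 - exp (-s)) / s) (𝓝[>] 0) (𝓝 1) := by
    simpa [div_eq_inv_mul] using (hasDerivAt_one_sub_exp_neg 0).tendsto_slope_zero_right
  have hnum : Tendsto (fun s => exp (-s) + 4 * exp (-s) ^ 2 + exp (-s) ^ 3) (𝓝[>] 0) (𝓝 6) := by
    have : Continuous fun s => exp (-s) + 4 * exp (-s) ^ 2 + exp (-s) ^ 3 := by fun_prop
    simpa [show (1 : ℝ) + 4 + 1 = 6 by norm_num] using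
      (this.tendsto 0).mono_left nhdsWithin_le_nhds
  refine Tendsto.congr (fun s => (scaledNegDeriv4_eq_inv_slope_pow_mul s).symm) ?_
  simpa using ((hslope.inv₀ one_ne_zero).pow 4).mul hnum

theorem scaledNegDeriv4_eq_pow_mul_exp_neg_mul (s : ℝ) : scaledNegDeriv4 s =
    s ^ 4 * exp (-s) * ((1 + 4 * exp (-s) + exp (-s) ^ 2) / (1 - exp (-s)) ^ 4) := by
  rw [scaledNegDeriv4, negDeriv4]
  ring

theorem tendsto_scaledNegDeriv4_atTop : Tendsto scaledNegDeriv4 atTop (𝓝 0) := by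
  have hexp := tendsto_exp_neg_atTop_nhds_zero
  have hfrac : Tendsto (fun s => (1 + 4 * exp (-s) + exp (-s) ^ 2) / (1 - exp (-s)) ^ 4)
      atTop (𝓝 1) := by
    simpa [Pi.div_def] using ((tendsto_const_nhds.add (hexp.const_mul 4)).add (hexp.pow 2)).div
      ((tendsto_const_nhds.sub hexp).pow 4) (by norm_num : ((1 : ℝ) - 0) ^ 4 ≠ 0)
  refine Tendsto.congr (fun s => (scaledNegDeriv4_eq_pow_mul_exp_neg_mul s).symm) ?_
  simpa using (tendsto_pow_mul_exp_neg_atTop_nhds_zero 4).mul hfrac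

theorem scaledNegDeriv4_pos {s : ℝ} (hs : 0 < s) : 0 < scaledNegDeriv4 s := by
  have := one_sub_exp_neg_pos hs
  unfold scaledNegDeriv4 negDeriv4
  positivity

theorem six_lt_scaledNegDeriv4_two : 6 < scaledNegDeriv4 2 := by
  have hx : exp (-2) = exp (-1) ^ 2 := by rw [← exp_nat_mul]; norm_num
  have hpos := one_sub_exp_neg_pos (s := 2) two_pos
  have hlo : 0.1353 < exp (-2) := by rw [hx]; nlinarith [exp_neg_one_gt_d9]
  have hhi : exp (-2) < 0.1354 := by rw [hx]; nlinarith [exp_neg_one_lt_d9, exp_pos (-1)]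
  rw [scaledNegDeriv4, negDeriv4, mul_div_assoc', lt_div_iff₀ (by positivity)]
  nlinarith [mul_pos (sub_pos.2 hlo) (sub_pos.2 hhi), pow_pos (sub_pos.2 hlo) 2,
    pow_pos (sub_pos.2 hlo) 3, pow_pos (sub_pos.2 hhi) 2, pow_pos (sub_pos.2 hhi) 3]

theorem exists_pos_scaledNegDeriv4_comp_mul_lt {r : ℝ} (hr₀ : 0 < r) (hr₁ : r ≠ 1) :
    ∃ t > 0, scaledNegDeriv4 (r * t) < scaledNegDeriv4 t := by
  rcases hr₁.lt_or_gt with hr₁ | hr₁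
  · exact exists_pos_comp_mul_lt_of_tendsto_nhdsGT hr₀ hr₁ tendsto_scaledNegDeriv4_nhdsGT
      two_pos six_lt_scaledNegDeriv4_two
  · exact exists_pos_comp_mul_lt_of_tendsto_atTop hr₁ tendsto_scaledNegDeriv4_atTop one_pos
      (scaledNegDeriv4_pos one_pos)

end LogOneSubExpNeg

open LogOneSubExpNeg

def Q (α β t : ℝ) : ℝ :=
  if t = 0 then β - α else (exp (-α * t) - exp (-β * t)) / (1 - exp (-t))

theorem log_Q_of_pos {α β t : ℝ} (hab : α < β) (ht : 0 < t) :
    log (Q α β t) = -α * t + (log (1 - exp (-((β - α) * t))) - log (1 - exp (-t))) := by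
  have hnum : exp (-α * t) - exp (-β * t) = exp (-α * t) * (1 - exp (-((β - α) * t))) := by
    rw [mul_sub, mul_one, ← exp_add]
    ring_nf
  rw [Q, if_neg ht.ne', hnum, log_div, log_mul, log_exp]
  · ring
  all_goals
    have := one_sub_exp_neg_pos ht
    have := one_sub_exp_neg_pos (mul_pos (sub_pos.2 hab) ht)
    positivity

theorem iteratedDeriv_four_log_Q {α β t : ℝ} (hab : α < β) (ht : 0 < t) :
    iteratedDeriv 4 (fun t => log (Q α β t)) t =
      (scaledNegDeriv4 t - scaledNegDeriv4 ((β - α) * t)) / t ^ 4 := by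
  set c := β - α
  have hc : 0 < c := sub_pos.2 hab
  have hscaled {h h' : ℝ → ℝ} (hh : ∀ s ≠ 0, HasDerivAt h (h' s) s) (k : ℕ) :
      ∀ t ∈ Ioi (0 : ℝ), HasDerivAt (fun t => c ^ k * h (c * t) - h t)
        (c ^ (k + 1) * h' (c * t) - h' t) t := fun t ht =>
    hasDerivAt_pow_mul_comp_mul_sub k (hh _ (mul_pos hc ht).ne') (hh t ht.ne')
  have h0 : ∀ t ∈ Ioi (0 : ℝ), HasDerivAt
      (fun t => -α * t + (log (1 - exp (-(c * t))) - log (1 - exp (-t))))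
      (-α + (c * deriv1 (c * t) - deriv1 t)) t := fun t ht => by
    simpa using ((hasDerivAt_id t).const_mul (-α)).fun_add
      (hscaled (fun _ hs => LogOneSubExpNeg.hasDerivAt hs) 0 t ht)
  have h1 : ∀ t ∈ Ioi (0 : ℝ), HasDerivAt (fun t => -α + (c * deriv1 (c * t) - deriv1 t))
      (c ^ 2 * deriv2 (c * t) - deriv2 t) t := fun t ht =>
    (hasDerivAt_const_add_iff _).2 <| by
      simpa using hscaled (fun _ hs => hasDerivAt_deriv1 hs) 1 t ht
  have h2 := hscaled (fun _ hs => hasDerivAt_deriv2 hs) 2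
  have h3 := hscaled (fun _ hs => hasDerivAt_deriv3 hs) 3
  have hlog : (fun t => log (Q α β t)) =ᶠ[𝓝 t]
      fun t => -α * t + (log (1 - exp (-(c * t))) - log (1 - exp (-t))) :=
    eventually_of_mem (Ioi_mem_nhds ht) fun s hs => log_Q_of_pos hab hs
  rw [hlog.iteratedDeriv_eq, iteratedDeriv_succ_eqOn isOpen_Ioi h0 3 ht,
    iteratedDeriv_succ_eqOn isOpen_Ioi h1 2 ht, iteratedDeriv_succ_eqOn isOpen_Ioi h2 1 ht,
    iteratedDeriv_succ_eqOn isOpen_Ioi h3 0 ht, iteratedDeriv_zero,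
    scaledNegDeriv4, scaledNegDeriv4]
  field_simp
  ring

theorem stmt19_general (α β : ℝ) (hab : α < β) (h1 : β - α ≠ 1) :
    (∃ t₁ ∈ Set.Ioi (0:ℝ), 0 < iteratedDeriv 4 (fun t => Real.log ((fun t : ℝ => if t = 0 then β - α else (Real.exp (-α*t) - Real.exp (-β*t)) / (1 - Real.exp (-t))) t)) t₁) ∧
    (∃ t₂ ∈ Set.Ioi (0:ℝ), iteratedDeriv 4 (fun t => Real.log ((fun t : ℝ => if t = 0 then β - α else (Real.exp (-α*t) - Real.exp (-β*t)) / (1 - Real.exp (-t))) t)) t₂ < 0) := by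
  change (∃ t₁ ∈ Ioi (0 : ℝ), 0 < iteratedDeriv 4 (fun t => log (Q α β t)) t₁) ∧
    ∃ t₂ ∈ Ioi (0 : ℝ), iteratedDeriv 4 (fun t => log (Q α β t)) t₂ < 0
  have hc : 0 < β - α := sub_pos.2 hab
  obtain ⟨t₁, ht₁, h₁⟩ := exists_pos_scaledNegDeriv4_comp_mul_lt hc h1
  obtain ⟨t₂, ht₂, h₂⟩ :=
    exists_pos_scaledNegDeriv4_comp_mul_lt (inv_pos.2 hc) (inv_ne_one.2 h1)
  refine ⟨⟨t₁, ht₁, ?_⟩, ⟨(β - α)⁻¹ * t₂, mem_Ioi.2 (by positivity), ?_⟩⟩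
  · rw [iteratedDeriv_four_log_Q hab ht₁]
    exact div_pos (sub_pos.2 h₁) (by positivity)
  · rw [iteratedDeriv_four_log_Q hab (by positivity), ← mul_assoc, mul_inv_cancel₀ hc.ne',
      one_mul]
    exact div_neg_of_neg_of_pos (sub_neg.2 h₂) (by positivity)

theorem stmt19 (α β : ℝ) (hab : α < β) (h1 : β - α ≠ 1) (h01 : (α, β) ≠ (0, 1)) :
    (∃ t₁ ∈ Set.Ioi (0:ℝ), 0 < iteratedDeriv 4 (fun t => Real.log ((fun t : ℝ => if t = 0 then β - α else (Real.exp (-α*t) - Real.exp (-β*t)) / (1 - Real.exp (-t))) t)) t₁) ∧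
    (∃ t₂ ∈ Set.Ioi (0:ℝ), iteratedDeriv 4 (fun t => Real.log ((fun t : ℝ => if t = 0 then β - α else (Real.exp (-α*t) - Real.exp (-β*t)) / (1 - Real.exp (-t))) t)) t₂ < 0) :=
  stmt19_general α β hab h1
end
end
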